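/- If a non-vertical line l lies weakly above the convex hull of the set of points {bot(s_i) : s_i vertical} ∪ {right(s_i) : s_i horizontal} and weakly below the convex hull of {top(s_i) : s_i vertical} ∪ {left(s_i) : s_i horizontal}, then l intersects every segment in S. -/
import Mathlib

private lemma seg_vert {x a b y : ℝ} (hab : a ≤ b) (hy : y ∈ Set.Icc a b) :
    ((x, y) : ℝ × ℝ) ∈ segment ℝ (x, a) (x, b) := by
  rw [← segment_eq_Icc hab] at hy
  obtain ⟨s, t, hs, ht, hst, hxy⟩ := hy
  refine ⟨s, t, hs, ht, hst, ?_⟩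
  simp only [Prod.smul_mk, Prod.mk_add_mk, smul_eq_mul, Prod.mk.injEq]
  constructor
  · linear_combination x * hst
  · exact hxy

private lemma seg_horiz {y a b x : ℝ} (hab : a ≤ b) (hx : x ∈ Set.Icc a b) :
    ((x, y) : ℝ × ℝ) ∈ segment ℝ (a, y) (b, y) := by
  rw [← segment_eq_Icc hab] at hx
  obtain ⟨s, t, hs, ht, hst, hxy⟩ := hx
  refine ⟨s, t, hs, ht, hst, ?_⟩
  simp only [Prod.smul_mk, Prod.mk_add_mk, smul_eq_mul, Prod.mk.injEq]
  constructor
  · exact hxy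
  · linear_combination y * hst

/-- If a non-vertical line `y = m*x + c` lies weakly above the convex hull of
the set of bottom endpoints of the vertical segments together with the right
endpoints of the horizontal segments, and weakly below the convex hull of the
top endpoints of the vertical segments together with the left endpoints of the
horizontal segments, then the line intersects every segment of the family. -/
theorem line_above_below_hulls_stabs
    (nv nh : ℕ)
    -- vertical segments: x-coordinate `vx i`, from `(vx i, lo i)` up to `(vx i, hi i)`
    (vx lo hi : Fin nv → ℝ) (hv : ∀ i, lo i ≤ hi i)
    -- horizontal segments: y-coordinate `hy j`, from `(la j, hy j)` to `(lb j, hy j)`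
    (hy la lb : Fin nh → ℝ) (hh : ∀ j, la j ≤ lb j)
    (m c : ℝ)
    (habove : ∀ p ∈ convexHull ℝ
        ((Set.range fun i => ((vx i, lo i) : ℝ × ℝ)) ∪
          (Set.range fun j => ((lb j, hy j) : ℝ × ℝ))),
        p.2 ≤ m * p.1 + c)
    (hbelow : ∀ p ∈ convexHull ℝ
        ((Set.range fun i => ((vx i, hi i) : ℝ × ℝ)) ∪
          (Set.range fun j => ((la j, hy j) : ℝ × ℝ))),
        m * p.1 + c ≤ p.2) :
    (∀ i, ∃ p : ℝ × ℝ,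
        p ∈ segment ℝ (vx i, lo i) (vx i, hi i) ∧ p.2 = m * p.1 + c) ∧
      (∀ j, ∃ p : ℝ × ℝ,
        p ∈ segment ℝ (la j, hy j) (lb j, hy j) ∧ p.2 = m * p.1 + c) := by
  constructor
  · intro i
    have h1 : lo i ≤ m * vx i + c := by
      have := habove (vx i, lo i)
        (subset_convexHull ℝ _ (Set.mem_union_left _ ⟨i, rfl⟩))
      simpa using this
    have h2 : m * vx i + c ≤ hi i := by
      have := hbelow (vx i, hi i)
        (subset_convexHull ℝ _ (Set.mem_union_left _ ⟨i, rfl⟩))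
      simpa using this
    exact ⟨(vx i, m * vx i + c), seg_vert (hv i) ⟨h1, h2⟩, rfl⟩
  · intro j
    have h1 : m * la j + c ≤ hy j := by
      have := hbelow (la j, hy j)
        (subset_convexHull ℝ _ (Set.mem_union_right _ ⟨j, rfl⟩))
      simpa using this
    have h2 : hy j ≤ m * lb j + c := by
      have := habove (lb j, hy j)
        (subset_convexHull ℝ _ (Set.mem_union_right _ ⟨j, rfl⟩))
      simpa using this
    have hcont : ContinuousOn (fun x => m * x + c) (Set.Icc (la j) (lb j)) := by
      fun_prop
    obtain ⟨x, hx, hfx⟩ := intermediate_value_Icc (hh j) hcont ⟨h1, h2⟩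
    exact ⟨(x, hy j), seg_horiz (hh j) hx, hfx.symm⟩
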